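/- arXiv:2306.05847 — 3 statements merged into one kernel-verified Lean document; each statement's English description precedes it below -/
import Mathlib

section
/- For a nonincreasing nonnegative sequence (μ_n) and 0 < α < 1, the sum Σ_{n≥1} σ_n / n^{2-α} is finite if and only if Σ_{n≥1} μ_{n-1} / n^{1-α} is finite; moreover Σ_{n≥1} μ_{n-1}/n^{1-α} ≤ Σ_{n≥1} σ_n/n^{2-α} ≤ C Σ_{n≥1} μ_{n-1}/n^{1-α} for a constant C depending only on α. -/
/-!
Write `s = 1 - α > 0`. Since `μ` is nonincreasing, `σ_{n+1} ≥ (n + 1) μ_n`, which gives the lower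
bound term by term. For the upper bound, exchange the order of summation:
`Σ_{n<N} σ_{n+1} (n+1)^{-(s+1)} = Σ_{i<N} μ_i Σ_{i≤n<N} (n+1)^{-(s+1)}`. By the mean value theorem
`s (n+1)^{-(s+1)} ≤ n^{-s} - (n+1)^{-s}`, so the inner tail telescopes to at most
`(1 + 1/s) (i+1)^{-s}`, and the partial sums of the first series are bounded by `1 + 1/s` times
those of the second.
-/

open Finset

theorem Real.mul_rpow_neg_succ_le_rpow_neg_sub {s x : ℝ} (hs : 0 < s) (hx : 0 < x) :
    s * (x + 1) ^ (-(s + 1)) ≤ x ^ (-s) - (x + 1) ^ (-s) := by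
  have hne : ∀ t ∈ Set.Icc x (x + 1), t ≠ 0 := fun t ht => (hx.trans_le ht.1).ne'
  obtain ⟨c, ⟨hxc, hcx⟩, hslope⟩ := exists_hasDerivAt_eq_slope (fun t => t ^ (-s))
    (fun t => -s * t ^ (-s - 1)) (lt_add_one x)
    (fun t ht => (Real.continuousAt_rpow_const t _ (Or.inl (hne t ht))).continuousWithinAt)
    (fun t ht => Real.hasDerivAt_rpow_const (Or.inl (hne t (Set.Ioo_subset_Icc_self ht))))
  rw [add_sub_cancel_left, div_one, ← neg_add'] at hslope
  calc s * (x + 1) ^ (-(s + 1))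
      ≤ s * c ^ (-(s + 1)) := mul_le_mul_of_nonneg_left
        (Real.rpow_le_rpow_of_nonpos (hx.trans hxc) hcx.le (by linarith)) hs.le
    _ = x ^ (-s) - (x + 1) ^ (-s) := by linarith

theorem sum_Ico_rpow_neg_succ_le {s : ℝ} (hs : 0 < s) (i N : ℕ) :
    ∑ n ∈ Ico i N, ((n : ℝ) + 1) ^ (-(s + 1)) ≤ (1 + 1 / s) * ((i : ℝ) + 1) ^ (-s) := by
  rcases le_or_gt N i with hNi | hiN
  · rw [Ico_eq_empty_of_le hNi, sum_empty]
    positivity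
  have head : ((i : ℝ) + 1) ^ (-(s + 1)) ≤ ((i : ℝ) + 1) ^ (-s) :=
    Real.rpow_le_rpow_of_exponent_le (by simp) (by linarith)
  have tail : ∑ n ∈ Ico (i + 1) N, ((n : ℝ) + 1) ^ (-(s + 1)) ≤
      1 / s * ((i : ℝ) + 1) ^ (-s) := calc
    _ ≤ ∑ n ∈ Ico (i + 1) N, 1 / s * ((n : ℝ) ^ (-s) - ((n : ℝ) + 1) ^ (-s)) := by
        gcongr with n hn
        have hn0 : (0 : ℝ) < n := Nat.cast_pos.mpr (by have := (mem_Ico.mp hn).1; omega)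
        rw [one_div_mul_eq_div, le_div_iff₀' hs]
        exact Real.mul_rpow_neg_succ_le_rpow_neg_sub hs hn0
    _ = 1 / s * (((i : ℝ) + 1) ^ (-s) - (N : ℝ) ^ (-s)) := by
        have := sum_Ico_sub (fun n : ℕ => (n : ℝ) ^ (-s)) hiN
        push_cast at this
        rw [← mul_sum, ← neg_sub, ← this, ← sum_neg_distrib]
        simp only [neg_sub]
    _ ≤ 1 / s * ((i : ℝ) + 1) ^ (-s) := by
        gcongr
        exact sub_le_self _ (by positivity)
  rw [sum_eq_sum_Ico_succ_bot hiN]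
  linarith

theorem sum_range_partialSum_mul {R : Type*} [CommSemiring R] (f w : ℕ → R) (N : ℕ) :
    ∑ n ∈ range N, (∑ i ∈ range (n + 1), f i) * w n =
      ∑ i ∈ range N, f i * ∑ n ∈ Ico i N, w n := by
  simp only [sum_mul, mul_sum, range_eq_Ico]
  exact (sum_Ico_Ico_comm 0 N _).symm

theorem Antitone.succ_mul_le_sum_range {f : ℕ → ℝ} (hf : Antitone f) (n : ℕ) :
    ((n : ℝ) + 1) * f n ≤ ∑ i ∈ range (n + 1), f i := by
  simpa using card_nsmul_le_sum (range (n + 1)) f (f n)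
    fun i hi => hf (Nat.lt_succ_iff.mp (mem_range.mp hi))

theorem summable_iff_and_tsum_le_of_sum_range_le {a b : ℕ → ℝ} {C : ℝ}
    (hb : ∀ n, 0 ≤ b n) (hba : ∀ n, b n ≤ a n) (hC : 0 ≤ C)
    (hsum : ∀ N, ∑ n ∈ range N, a n ≤ C * ∑ n ∈ range N, b n) :
    (Summable a ↔ Summable b) ∧ ∑' n, b n ≤ ∑' n, a n ∧ ∑' n, a n ≤ C * ∑' n, b n := by
  by_cases hbs : Summable b
  · have hbound : ∀ N, ∑ n ∈ range N, a n ≤ C * ∑' n, b n := fun N =>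
      (hsum N).trans (mul_le_mul_of_nonneg_left (hbs.sum_le_tsum _ fun n _ => hb n) hC)
    have has : Summable a := summable_of_sum_range_le (fun n => (hb n).trans (hba n)) hbound
    exact ⟨iff_of_true has hbs, hbs.tsum_le_tsum hba has, has.tsum_le_of_sum_range_le hbound⟩
  · have has : ¬ Summable a := fun has => hbs (has.of_nonneg_of_le hb hba)
    simp [iff_of_false has hbs, tsum_eq_zero_of_not_summable has,
      tsum_eq_zero_of_not_summable hbs]

theorem stmt1_general (α : ℝ) (hα1 : α < 1) (μ : ℕ → ℝ)
    (hmono : Antitone μ) (hpos : ∀ n, 0 ≤ μ n) :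
    ∃ C : ℝ, 0 < C ∧
      ((Summable (fun n : ℕ =>
          (∑ i ∈ Finset.range (n + 1), μ i) / ((n : ℝ) + 1) ^ (2 - α)) ↔
        Summable (fun n : ℕ => μ n / ((n : ℝ) + 1) ^ (1 - α))) ∧
      (∑' n : ℕ, μ n / ((n : ℝ) + 1) ^ (1 - α)) ≤
        (∑' n : ℕ, (∑ i ∈ Finset.range (n + 1), μ i) / ((n : ℝ) + 1) ^ (2 - α)) ∧
      (∑' n : ℕ, (∑ i ∈ Finset.range (n + 1), μ i) / ((n : ℝ) + 1) ^ (2 - α)) ≤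
        C * ∑' n : ℕ, μ n / ((n : ℝ) + 1) ^ (1 - α)) := by
  obtain ⟨s, hs, rfl⟩ : ∃ s, 0 < s ∧ α = 1 - s := ⟨1 - α, by linarith, by ring⟩
  simp only [show (2 : ℝ) - (1 - s) = s + 1 by ring, sub_sub_cancel]
  have hn : ∀ n : ℕ, (0 : ℝ) < (n : ℝ) + 1 := fun n => by positivity
  have div_rpow : ∀ (x p : ℝ) (n : ℕ), x / ((n : ℝ) + 1) ^ p = x * ((n : ℝ) + 1) ^ (-p) :=
    fun x p n => by rw [Real.rpow_neg (hn n).le, div_eq_mul_inv]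
  refine ⟨1 + 1 / s, by positivity,
    summable_iff_and_tsum_le_of_sum_range_le (fun n => by have := hpos n; positivity)
      (fun n => ?_) (by positivity) (fun N => ?_)⟩
  · rw [Real.rpow_add_one (hn n).ne', ← mul_div_mul_right (μ n) _ (hn n).ne', mul_comm (μ n)]
    exact div_le_div_of_nonneg_right (hmono.succ_mul_le_sum_range n) (by positivity)
  · simp only [div_rpow, sum_range_partialSum_mul]
    rw [mul_sum (range N)]
    refine sum_le_sum fun i _ => ?_
    calc μ i * ∑ n ∈ Ico i N, ((n : ℝ) + 1) ^ (-(s + 1))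
        ≤ μ i * ((1 + 1 / s) * ((i : ℝ) + 1) ^ (-s)) :=
          mul_le_mul_of_nonneg_left (sum_Ico_rpow_neg_succ_le hs i N) (hpos i)
      _ = (1 + 1 / s) * (μ i * ((i : ℝ) + 1) ^ (-s)) := by ring

/-- For a nonincreasing nonnegative sequence `μ` with partial sums
`σ_n = μ_0 + ⋯ + μ_{n-1}` and `0 < α < 1`:
`Σ_{n≥1} σ_n / n^(2-α) < ∞ ↔ Σ_{n≥1} μ_{n-1} / n^(1-α) < ∞`, together with the
two-sided comparison of the sums (indexing shifted so `n = m+1`, `m : ℕ`). -/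
theorem stmt1 (α : ℝ) (hα0 : 0 < α) (hα1 : α < 1) (μ : ℕ → ℝ)
    (hmono : Antitone μ) (hpos : ∀ n, 0 ≤ μ n) :
    ∃ C : ℝ, 0 < C ∧
      ((Summable (fun n : ℕ =>
          (∑ i ∈ Finset.range (n + 1), μ i) / ((n : ℝ) + 1) ^ (2 - α)) ↔
        Summable (fun n : ℕ => μ n / ((n : ℝ) + 1) ^ (1 - α))) ∧
      (∑' n : ℕ, μ n / ((n : ℝ) + 1) ^ (1 - α)) ≤
        (∑' n : ℕ, (∑ i ∈ Finset.range (n + 1), μ i) / ((n : ℝ) + 1) ^ (2 - α)) ∧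
      (∑' n : ℕ, (∑ i ∈ Finset.range (n + 1), μ i) / ((n : ℝ) + 1) ^ (2 - α)) ≤
        C * ∑' n : ℕ, μ n / ((n : ℝ) + 1) ^ (1 - α)) :=
  stmt1_general α hα1 μ hmono hpos
end

section
/- Let I, J be ideals of B(H) with I ⊆ J(I:J), and let μ_I, μ_J be the locally convex topologies on B(H) generated by the seminorms x ↦ ‖x·k‖_I (k ∈ I) and x ↦ ‖x·k‖_J (k ∈ J) respectively, where ‖·‖_I, ‖·‖_J are complete symmetric norms. Then μ_I is coarser than μ_J: every net converging to 0 in μ_J converges to 0 in μ_I. -/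
/-!
For `q ∈ (I:J)`, right multiplication by `q` maps `J` into `I` and is continuous for the operator
norm. A symmetric norm dominates the operator norm (compress an operator between rank-one
operators), so `(J, ‖·‖_J)` and `(I, ‖·‖_I)` embed continuously into `B(H)` and the closed graph
theorem bounds `a ↦ a q` from `(J, ‖·‖_J)` to `(I, ‖·‖_I)`. Hence `‖x a q‖_I ≤ C ‖x a‖_J` for
`a ∈ J`, so `μ_J`-null nets are `μ_I`-null against every product `a q`, and by the triangle
inequality against every element of the additive span `J·(I:J)`, which contains `I`.
-/

open Filter Topology

variable {H : Type*} [NormedAddCommGroup H] [InnerProductSpace ℂ H] [CompleteSpace H]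

/-- The ideal quotient `(I:J) = {x | xJ ⊆ I} = {x | Jx ⊆ I}` (the two descriptions agree
since ideals of `B(H)` are self-adjoint). -/
def idealQuot (I J : Set (H →L[ℂ] H)) : Set (H →L[ℂ] H) :=
  {x | (∀ j ∈ J, x * j ∈ I) ∧ ∀ j ∈ J, j * x ∈ I}

/-- The product of two ideals: the additive subgroup generated by pairwise products. -/
def idealProd (A B : Set (H →L[ℂ] H)) : Set (H →L[ℂ] H) :=
  ↑(AddSubgroup.closure {z : H →L[ℂ] H | ∃ a ∈ A, ∃ b ∈ B, z = a * b})

theorem LinearMap.continuous_of_comp_eq_of_injective {𝕜 F G X Y : Type*}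
    [NontriviallyNormedField 𝕜] [NormedAddCommGroup F] [NormedSpace 𝕜 F] [CompleteSpace F]
    [NormedAddCommGroup G] [NormedSpace 𝕜 G] [CompleteSpace G]
    [TopologicalSpace X] [T2Space X] [TopologicalSpace Y]
    (g : G →ₗ[𝕜] F) {ι : F → X} (hι : Continuous ι) (hinj : Function.Injective ι)
    {κ : G → Y} (hκ : Continuous κ) {f : Y → X} (hf : Continuous f)
    (h : ∀ x, ι (g x) = f (κ x)) : Continuous g := by
  refine g.continuous_of_isClosed_graph ?_
  have hgraph : (g.graph : Set (G × F)) = {p | ι p.2 = f (κ p.1)} := by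
    ext ⟨x, y⟩
    simp [LinearMap.mem_graph_iff, ← h, hinj.eq_iff]
  rw [hgraph]
  exact isClosed_eq (hι.comp continuous_snd) (hf.comp (hκ.comp continuous_fst))

section BanachNorm

variable {𝕜 E : Type*} [NontriviallyNormedField 𝕜] [NormedAddCommGroup E] [NormedSpace 𝕜 E]

structure IsBanachNormOn (S : Submodule 𝕜 E) (N : E → ℝ) : Prop where
  add_le : ∀ x y : E, x ∈ S → y ∈ S → N (x + y) ≤ N x + N y
  smul_eq : ∀ (c : 𝕜), ∀ x ∈ S, N (c • x) = ‖c‖ * N x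
  norm_le : ∃ C : ℝ, ∀ x ∈ S, ‖x‖ ≤ C * N x
  complete : ∀ f : ℕ → E, (∀ n, f n ∈ S) →
    (∀ ε : ℝ, 0 < ε → ∃ n₀ : ℕ, ∀ m n : ℕ, n₀ ≤ m → n₀ ≤ n → N (f m - f n) < ε) →
    ∃ g ∈ S, Tendsto (fun n => N (f n - g)) atTop (𝓝 0)

namespace IsBanachNormOn

variable {S : Submodule 𝕜 E} {N : E → ℝ}

/-- A copy of `S` that carries the norm `N` instead of the norm inherited from `E`. -/
def Space (_ : IsBanachNormOn S N) : Type _ := S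

instance {hS : IsBanachNormOn S N} : AddCommGroup hS.Space := inferInstanceAs (AddCommGroup S)

instance {hS : IsBanachNormOn S N} : Module 𝕜 hS.Space := inferInstanceAs (Module 𝕜 S)

def val (hS : IsBanachNormOn S N) : hS.Space →ₗ[𝕜] E := S.subtype

def ofMem (hS : IsBanachNormOn S N) (x : E) (hx : x ∈ S) : hS.Space := ⟨x, hx⟩

theorem val_mem (hS : IsBanachNormOn S N) (x : hS.Space) : hS.val x ∈ S := Subtype.prop x

theorem val_injective (hS : IsBanachNormOn S N) : Function.Injective hS.val :=
  Subtype.val_injective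

@[simp] theorem val_ofMem (hS : IsBanachNormOn S N) (x : E) (hx : x ∈ S) :
    hS.val (hS.ofMem x hx) = x :=
  rfl

theorem apply_zero (hS : IsBanachNormOn S N) : N 0 = 0 := by
  simpa using hS.smul_eq 0 0 S.zero_mem

theorem apply_neg (hS : IsBanachNormOn S N) {x : E} (hx : x ∈ S) : N (-x) = N x := by
  simpa using hS.smul_eq (-1) x hx

theorem eq_zero_of_apply_eq_zero (hS : IsBanachNormOn S N) {x : E} (hx : x ∈ S)
    (h : N x = 0) : x = 0 := by
  obtain ⟨C, hC⟩ := hS.norm_le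
  simpa [h] using hC x hx

instance {hS : IsBanachNormOn S N} : NormedAddCommGroup hS.Space :=
  AddGroupNorm.toNormedAddCommGroup
    { toFun := fun x => N (hS.val x)
      map_zero' := hS.apply_zero
      add_le' := fun x y => hS.add_le _ _ (hS.val_mem x) (hS.val_mem y)
      neg' := fun x => hS.apply_neg (hS.val_mem x)
      eq_zero_of_map_eq_zero' := fun x h =>
        hS.val_injective (hS.eq_zero_of_apply_eq_zero (hS.val_mem x) h) }

theorem norm_def (hS : IsBanachNormOn S N) (x : hS.Space) : ‖x‖ = N (hS.val x) := rfl

instance {hS : IsBanachNormOn S N} : NormedSpace 𝕜 hS.Space where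
  norm_smul_le c x := (hS.smul_eq c _ (hS.val_mem x)).le

theorem nonneg (hS : IsBanachNormOn S N) {x : E} (hx : x ∈ S) : 0 ≤ N x :=
  norm_nonneg (hS.ofMem x hx)

instance {hS : IsBanachNormOn S N} : CompleteSpace hS.Space := by
  refine Metric.complete_of_cauchySeq_tendsto fun u hu => ?_
  have hcauchy : ∀ ε : ℝ, 0 < ε → ∃ n₀ : ℕ, ∀ m n : ℕ, n₀ ≤ m → n₀ ≤ n →
      N (hS.val (u m) - hS.val (u n)) < ε := fun ε hε =>
    (Metric.cauchySeq_iff.mp hu ε hε).imp fun _ h m n hm hn => by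
      simpa [dist_eq_norm, norm_def] using h m hm n hn
  obtain ⟨g, hg, hlim⟩ := hS.complete _ (fun n => hS.val_mem (u n)) hcauchy
  exact ⟨hS.ofMem g hg, tendsto_iff_norm_sub_tendsto_zero.mpr (by simpa [norm_def] using hlim)⟩

theorem continuous_val (hS : IsBanachNormOn S N) : Continuous hS.val := by
  obtain ⟨C, hC⟩ := hS.norm_le
  exact AddMonoidHomClass.continuous_of_bound hS.val C fun x => hC _ (hS.val_mem x)

theorem exists_bound_of_mapsTo (hS : IsBanachNormOn S N) {F : Type*} [NormedAddCommGroup F]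
    [NormedSpace 𝕜 F] {T : Submodule 𝕜 F} {M : F → ℝ} (hT : IsBanachNormOn T M)
    (f : E →L[𝕜] F) (hf : ∀ x ∈ S, f x ∈ T) : ∃ C : ℝ, ∀ x ∈ S, M (f x) ≤ C * N x := by
  let g : hS.Space →ₗ[𝕜] hT.Space := f.toLinearMap.restrict hf
  have hg : Continuous g :=
    g.continuous_of_comp_eq_of_injective hT.continuous_val hT.val_injective hS.continuous_val
      f.continuous fun _ => rfl
  exact ⟨‖(⟨g, hg⟩ : hS.Space →L[𝕜] hT.Space)‖, fun x hx =>
    (⟨g, hg⟩ : hS.Space →L[𝕜] hT.Space).le_opNorm (hS.ofMem x hx)⟩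

theorem tendsto_of_mem_closure (hS : IsBanachNormOn S N) {ι : Type*} {l : Filter ι}
    (φ : ι → E →+ E) (hφ : ∀ i, ∀ x ∈ S, φ i x ∈ S) {G : Set E} (hGS : G ⊆ S)
    (hG : ∀ g ∈ G, Tendsto (fun i => N (φ i g)) l (𝓝 0)) {k : E}
    (hk : k ∈ AddSubgroup.closure G) : Tendsto (fun i => N (φ i k)) l (𝓝 0) := by
  have hcl : AddSubgroup.closure G ≤ S.toAddSubgroup := (AddSubgroup.closure_le _).mpr hGS
  induction hk using AddSubgroup.closure_induction with
  | mem g hg => exact hG g hg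
  | zero => simpa [hS.apply_zero] using tendsto_const_nhds
  | add a b ha hb iha ihb =>
    refine squeeze_zero (fun i => hS.nonneg (hφ i _ (S.add_mem (hcl ha) (hcl hb))))
      (fun i => ?_) (by simpa using iha.add ihb)
    rw [map_add]
    exact hS.add_le _ _ (hφ i _ (hcl ha)) (hφ i _ (hcl hb))
  | neg a ha iha =>
    have hneg : ∀ i, N (φ i (-a)) = N (φ i a) := fun i => by
      rw [map_neg, hS.apply_neg (hφ i a (hcl ha))]
    simpa only [hneg] using iha

end IsBanachNormOn

end BanachNorm

section SymmetricNorm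

open InnerProductSpace

variable {𝕜 V : Type*} [RCLike 𝕜] [NormedAddCommGroup V] [InnerProductSpace 𝕜 V]
  {I : Set (V →L[𝕜] V)} {N : (V →L[𝕜] V) → ℝ}

theorem sq_norm_apply_mul_le_of_rankOne_mem
    (hNsmul : ∀ (c : 𝕜), ∀ T ∈ I, N (c • T) = ‖c‖ * N T)
    (hNsym : ∀ A B : V →L[𝕜] V, ∀ X ∈ I, N (A * X * B) ≤ ‖A‖ * N X * ‖B‖)
    {u : V} (hu : rankOne 𝕜 u u ∈ I) {X : V →L[𝕜] V} (hX : X ∈ I) (b : V) :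
    ‖X b‖ ^ 2 * N (rankOne 𝕜 u u) ≤ ‖X b‖ * (‖u‖ ^ 2 * N X * ‖b‖) := by
  have hsandwich :
      rankOne 𝕜 u (X b) * X * rankOne 𝕜 b u = ((‖X b‖ ^ 2 : ℝ) : 𝕜) • rankOne 𝕜 u u := by
    rw [mul_assoc, ContinuousLinearMap.mul_def, ContinuousLinearMap.mul_def, comp_rankOne,
      rankOne_comp_rankOne, inner_self_eq_norm_sq_to_K]
    norm_cast
  calc ‖X b‖ ^ 2 * N (rankOne 𝕜 u u)
      = N (rankOne 𝕜 u (X b) * X * rankOne 𝕜 b u) := by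
        rw [hsandwich, hNsmul _ _ hu, RCLike.norm_ofReal, abs_of_nonneg (sq_nonneg _)]
    _ ≤ ‖rankOne 𝕜 u (X b)‖ * N X * ‖rankOne 𝕜 b u‖ := hNsym _ _ X hX
    _ = ‖X b‖ * (‖u‖ ^ 2 * N X * ‖b‖) := by simp only [norm_rankOne]; ring

theorem exists_opNorm_le_mul_of_symmetric
    (hIr : ∀ A T : V →L[𝕜] V, T ∈ I → T * A ∈ I)
    (hN0 : ∀ T ∈ I, 0 ≤ N T) (hNdef : ∀ T ∈ I, N T = 0 → T = 0)
    (hNsmul : ∀ (c : 𝕜), ∀ T ∈ I, N (c • T) = ‖c‖ * N T)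
    (hNsym : ∀ A B : V →L[𝕜] V, ∀ X ∈ I, N (A * X * B) ≤ ‖A‖ * N X * ‖B‖) :
    ∃ C : ℝ, ∀ X ∈ I, ‖X‖ ≤ C * N X := by
  by_cases hI : ∀ T ∈ I, T = 0
  · exact ⟨0, fun X hX => by simp [hI X hX]⟩
  obtain ⟨T, hTI, hT⟩ : ∃ T ∈ I, T ≠ 0 := by simpa using hI
  obtain ⟨v, hv⟩ := ContinuousLinearMap.exists_ne_zero hT
  set u := T v
  have hu : rankOne 𝕜 u u ∈ I := by
    simpa [ContinuousLinearMap.mul_def, comp_rankOne] using hIr (rankOne 𝕜 v u) T hTI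
  have hNu : 0 < N (rankOne 𝕜 u u) :=
    (hN0 _ hu).lt_of_ne fun h => rankOne_ne_zero hv hv (hNdef _ hu h.symm)
  refine ⟨‖u‖ ^ 2 / N (rankOne 𝕜 u u), fun X hX => ?_⟩
  refine ContinuousLinearMap.opNorm_le_bound _ (by positivity [hN0 X hX]) fun b => ?_
  have hsq := sq_norm_apply_mul_le_of_rankOne_mem hNsmul hNsym hu hX b
  rw [div_mul_eq_mul_div, div_mul_eq_mul_div, le_div_iff₀ hNu]
  rcases (norm_nonneg (X b)).eq_or_lt with hXb | hXb
  · have := hN0 X hX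
    rw [← hXb, zero_mul]
    positivity
  · nlinarith

end SymmetricNorm

def Submodule.ofMulLeftMem (𝕜 : Type*) {A : Type*} [CommSemiring 𝕜] [Ring A] [Algebra 𝕜 A]
    (I : Set A) (h0 : 0 ∈ I) (hadd : ∀ S T : A, S ∈ I → T ∈ I → S + T ∈ I)
    (hmul : ∀ a T : A, T ∈ I → a * T ∈ I) : Submodule 𝕜 A where
  carrier := I
  zero_mem' := h0
  add_mem' := hadd _ _
  smul_mem' c T hT := by
    rw [Algebra.smul_def]
    exact hmul _ _ hT

theorem stmt11_general (I J : Set (H →L[ℂ] H)) (NI NJ : (H →L[ℂ] H) → ℝ)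
    -- I and J are two-sided ideals
    (hI0 : (0 : H →L[ℂ] H) ∈ I) (hIadd : ∀ S T : H →L[ℂ] H, S ∈ I → T ∈ I → S + T ∈ I)
    (hIl : ∀ A T : H →L[ℂ] H, T ∈ I → A * T ∈ I)
    (hIr : ∀ A T : H →L[ℂ] H, T ∈ I → T * A ∈ I)
    (hJ0 : (0 : H →L[ℂ] H) ∈ J) (hJadd : ∀ S T : H →L[ℂ] H, S ∈ J → T ∈ J → S + T ∈ J)
    (hJl : ∀ A T : H →L[ℂ] H, T ∈ J → A * T ∈ J)
    (hJr : ∀ A T : H →L[ℂ] H, T ∈ J → T * A ∈ J)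
    -- NI is a complete symmetric norm on I
    (hNI0 : ∀ T ∈ I, 0 ≤ NI T) (hNIdef : ∀ T ∈ I, NI T = 0 → T = 0)
    (hNItri : ∀ S T : H →L[ℂ] H, S ∈ I → T ∈ I → NI (S + T) ≤ NI S + NI T)
    (hNIsmul : ∀ (c : ℂ), ∀ T ∈ I, NI (c • T) = ‖c‖ * NI T)
    (hNIsym : ∀ A B : H →L[ℂ] H, ∀ X ∈ I, NI (A * X * B) ≤ ‖A‖ * NI X * ‖B‖)
    (hIcomp : ∀ f : ℕ → (H →L[ℂ] H), (∀ n, f n ∈ I) →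
      (∀ ε : ℝ, 0 < ε → ∃ N : ℕ, ∀ m n : ℕ, N ≤ m → N ≤ n → NI (f m - f n) < ε) →
      ∃ g ∈ I, Tendsto (fun n => NI (f n - g)) atTop (𝓝 0))
    -- NJ is a complete symmetric norm on J
    (hNJ0 : ∀ T ∈ J, 0 ≤ NJ T) (hNJdef : ∀ T ∈ J, NJ T = 0 → T = 0)
    (hNJtri : ∀ S T : H →L[ℂ] H, S ∈ J → T ∈ J → NJ (S + T) ≤ NJ S + NJ T)
    (hNJsmul : ∀ (c : ℂ), ∀ T ∈ J, NJ (c • T) = ‖c‖ * NJ T)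
    (hNJsym : ∀ A B : H →L[ℂ] H, ∀ X ∈ J, NJ (A * X * B) ≤ ‖A‖ * NJ X * ‖B‖)
    (hJcomp : ∀ f : ℕ → (H →L[ℂ] H), (∀ n, f n ∈ J) →
      (∀ ε : ℝ, 0 < ε → ∃ N : ℕ, ∀ m n : ℕ, N ≤ m → N ≤ n → NJ (f m - f n) < ε) →
      ∃ g ∈ J, Tendsto (fun n => NJ (f n - g)) atTop (𝓝 0))
    -- the factorization hypothesis I ⊆ J·(I:J)
    (hIJ : I ⊆ idealProd J (idealQuot I J)) :
    ∀ {ι : Type*} (l : Filter ι) (x : ι → H →L[ℂ] H),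
      (∀ k ∈ J, Tendsto (fun i => NJ (x i * k)) l (𝓝 0)) →
      ∀ k ∈ I, Tendsto (fun i => NI (x i * k)) l (𝓝 0) := by
  intro ι l x hx k hk
  let SI := Submodule.ofMulLeftMem ℂ I hI0 hIadd hIl
  let SJ := Submodule.ofMulLeftMem ℂ J hJ0 hJadd hJl
  have hI : IsBanachNormOn SI NI :=
    ⟨hNItri, hNIsmul, exists_opNorm_le_mul_of_symmetric hIr hNI0 hNIdef hNIsmul hNIsym, hIcomp⟩
  have hJ : IsBanachNormOn SJ NJ :=
    ⟨hNJtri, hNJsmul, exists_opNorm_le_mul_of_symmetric hJr hNJ0 hNJdef hNJsmul hNJsym, hJcomp⟩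
  refine hI.tendsto_of_mem_closure (fun i => AddMonoidHom.mulLeft (x i)) (fun i => hIl (x i))
    ?_ ?_ (hIJ hk)
  · rintro _ ⟨a, ha, q, hq, rfl⟩
    exact hq.2 a ha
  · rintro _ ⟨a, ha, q, hq, rfl⟩
    obtain ⟨C, hC⟩ := hJ.exists_bound_of_mapsTo hI
      ((ContinuousLinearMap.mul ℂ (H →L[ℂ] H)).flip q) fun a ha => show a * q ∈ I from hq.2 a ha
    refine squeeze_zero (fun i => hNI0 _ (hIl (x i) _ (hq.2 a ha))) (fun i => ?_)
      (by simpa using (hx a ha).const_mul C)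
    simpa [mul_assoc] using hC _ (hJl (x i) a ha)

/-- If `I ⊆ J·(I:J)` for symmetrically-normed ideals `I`, `J` of `B(H)`, then the
left-multiplier topology `μ_I` (generated by the seminorms `x ↦ ‖x k‖_I`, `k ∈ I`) is
coarser than `μ_J`: every net tending to `0` in `μ_J` tends to `0` in `μ_I`. -/
theorem stmt11 (I J : Set (H →L[ℂ] H)) (NI NJ : (H →L[ℂ] H) → ℝ)
    -- I and J are two-sided ideals
    (hI0 : (0 : H →L[ℂ] H) ∈ I) (hIadd : ∀ S T : H →L[ℂ] H, S ∈ I → T ∈ I → S + T ∈ I)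
    (hIneg : ∀ T : H →L[ℂ] H, T ∈ I → -T ∈ I)
    (hIl : ∀ A T : H →L[ℂ] H, T ∈ I → A * T ∈ I)
    (hIr : ∀ A T : H →L[ℂ] H, T ∈ I → T * A ∈ I)
    (hJ0 : (0 : H →L[ℂ] H) ∈ J) (hJadd : ∀ S T : H →L[ℂ] H, S ∈ J → T ∈ J → S + T ∈ J)
    (hJneg : ∀ T : H →L[ℂ] H, T ∈ J → -T ∈ J)
    (hJl : ∀ A T : H →L[ℂ] H, T ∈ J → A * T ∈ J)
    (hJr : ∀ A T : H →L[ℂ] H, T ∈ J → T * A ∈ J)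
    -- NI is a complete symmetric norm on I
    (hNI0 : ∀ T ∈ I, 0 ≤ NI T) (hNIdef : ∀ T ∈ I, NI T = 0 → T = 0)
    (hNItri : ∀ S T : H →L[ℂ] H, S ∈ I → T ∈ I → NI (S + T) ≤ NI S + NI T)
    (hNIsmul : ∀ (c : ℂ), ∀ T ∈ I, NI (c • T) = ‖c‖ * NI T)
    (hNIsym : ∀ A B : H →L[ℂ] H, ∀ X ∈ I, NI (A * X * B) ≤ ‖A‖ * NI X * ‖B‖)
    (hIcomp : ∀ f : ℕ → (H →L[ℂ] H), (∀ n, f n ∈ I) →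
      (∀ ε : ℝ, 0 < ε → ∃ N : ℕ, ∀ m n : ℕ, N ≤ m → N ≤ n → NI (f m - f n) < ε) →
      ∃ g ∈ I, Tendsto (fun n => NI (f n - g)) atTop (𝓝 0))
    -- NJ is a complete symmetric norm on J
    (hNJ0 : ∀ T ∈ J, 0 ≤ NJ T) (hNJdef : ∀ T ∈ J, NJ T = 0 → T = 0)
    (hNJtri : ∀ S T : H →L[ℂ] H, S ∈ J → T ∈ J → NJ (S + T) ≤ NJ S + NJ T)
    (hNJsmul : ∀ (c : ℂ), ∀ T ∈ J, NJ (c • T) = ‖c‖ * NJ T)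
    (hNJsym : ∀ A B : H →L[ℂ] H, ∀ X ∈ J, NJ (A * X * B) ≤ ‖A‖ * NJ X * ‖B‖)
    (hJcomp : ∀ f : ℕ → (H →L[ℂ] H), (∀ n, f n ∈ J) →
      (∀ ε : ℝ, 0 < ε → ∃ N : ℕ, ∀ m n : ℕ, N ≤ m → N ≤ n → NJ (f m - f n) < ε) →
      ∃ g ∈ J, Tendsto (fun n => NJ (f n - g)) atTop (𝓝 0))
    -- the factorization hypothesis I ⊆ J·(I:J)
    (hIJ : I ⊆ idealProd J (idealQuot I J)) :
    ∀ {ι : Type*} (l : Filter ι) (x : ι → H →L[ℂ] H),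
      (∀ k ∈ J, Tendsto (fun i => NJ (x i * k)) l (𝓝 0)) →
      ∀ k ∈ I, Tendsto (fun i => NI (x i * k)) l (𝓝 0) :=
  stmt11_general I J NI NJ hI0 hIadd hIl hIr hJ0 hJadd hJl hJr hNI0 hNIdef hNItri hNIsmul hNIsym
    hIcomp hNJ0 hNJdef hNJtri hNJsmul hNJsym hJcomp hIJ
end

section
/- For a symmetrically-normed ideal I of B(H) (with norm ‖·‖_I satisfying ‖AXB‖_I ≤ ‖A‖‖X‖_I‖B‖ and ‖X‖_I = ‖X‖ for rank-one X), a subset S ⊆ B(H) is bounded in the multiplier topology μ_I (generated by seminorms x ↦ ‖xk‖_I, k ∈ I) if and only if S is bounded in operator norm. -/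
/-!
A rank-one operator can be factored through any nonzero operator, so a nonzero ideal contains
all rank-one operators `rankOne ξ η`. For a unit vector `η` the seminorm `x ↦ ‖x (rankOne ξ η)‖_I`
equals `‖x ξ‖`, so a `μ_I`-bounded set is pointwise bounded, hence norm-bounded by the uniform
boundedness principle. Conversely `‖x k‖_I ≤ ‖x‖ ‖k‖_I`.
-/

section RankOne

open InnerProductSpace ContinuousLinearMap

variable {𝕜 E : Type*} [RCLike 𝕜] [NormedAddCommGroup E] [InnerProductSpace 𝕜 E]

lemma rankOne_inner_self_inv_smul_apply_self {ζ : E} (hζ : ζ ≠ 0) (ξ : E) :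
    rankOne 𝕜 ((inner 𝕜 ζ ζ)⁻¹ • ξ) ζ ζ = ξ := by
  rw [rankOne_apply, smul_smul, mul_inv_cancel₀ (inner_self_ne_zero.mpr hζ), one_smul]

theorem rankOne_mem_of_ideal {I : Set (E →L[𝕜] E)}
    (hIl : ∀ A T : E →L[𝕜] E, T ∈ I → A * T ∈ I) (hIr : ∀ A T : E →L[𝕜] E, T ∈ I → T * A ∈ I)
    (hInz : ∃ T ∈ I, T ≠ 0) (ξ η : E) : rankOne 𝕜 ξ η ∈ I := by
  obtain ⟨T, hT, hT0⟩ := hInz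
  obtain ⟨w, hw⟩ := DFunLike.ne_iff.mp hT0
  have hfactor : rankOne 𝕜 ((inner 𝕜 (T w) (T w))⁻¹ • ξ) (T w) * T * rankOne 𝕜 w η =
      rankOne 𝕜 ξ η := by
    rw [mul_assoc, mul_def, mul_def, comp_rankOne, comp_rankOne,
      rankOne_inner_self_inv_smul_apply_self hw]
  exact hfactor ▸ hIr _ _ (hIl _ _ hT)

theorem symmNorm_mul_rankOne {I : Set (E →L[𝕜] E)} {NI : (E →L[𝕜] E) → ℝ}
    (hIl : ∀ A T : E →L[𝕜] E, T ∈ I → A * T ∈ I) (hrankOne : ∀ ξ η : E, rankOne 𝕜 ξ η ∈ I)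
    (hNIrk1 : ∀ X ∈ I, (∃ u v : E, X = rankOne 𝕜 u v) → NI X = ‖X‖) (x : E →L[𝕜] E) (ξ η : E) :
    NI (x * rankOne 𝕜 ξ η) = ‖x ξ‖ * ‖η‖ := by
  have hx : x * rankOne 𝕜 ξ η = rankOne 𝕜 (x ξ) η := comp_rankOne ξ η x
  rw [hNIrk1 _ (hIl _ _ (hrankOne ξ η)) ⟨_, _, hx⟩, hx, norm_rankOne]

theorem symmNorm_mul_le {I : Set (E →L[𝕜] E)} {NI : (E →L[𝕜] E) → ℝ}
    (hNI0 : ∀ T ∈ I, 0 ≤ NI T)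
    (hNIsym : ∀ A B : E →L[𝕜] E, ∀ X ∈ I, NI (A * X * B) ≤ ‖A‖ * NI X * ‖B‖)
    (x : E →L[𝕜] E) {k : E →L[𝕜] E} (hk : k ∈ I) : NI (x * k) ≤ ‖x‖ * NI k :=
  calc NI (x * k) = NI (x * k * 1) := by rw [mul_one]
    _ ≤ ‖x‖ * NI k * ‖(1 : E →L[𝕜] E)‖ := hNIsym x 1 k hk
    _ ≤ ‖x‖ * NI k := mul_le_of_le_one_right (mul_nonneg (norm_nonneg x) (hNI0 k hk)) norm_id_le

end RankOne

theorem stmt18_general {H : Type*} [NormedAddCommGroup H] [InnerProductSpace ℂ H]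
    [CompleteSpace H] (I : Set (H →L[ℂ] H)) (NI : (H →L[ℂ] H) → ℝ)
    -- I is a nonzero two-sided ideal
    (hIl : ∀ A T : H →L[ℂ] H, T ∈ I → A * T ∈ I)
    (hIr : ∀ A T : H →L[ℂ] H, T ∈ I → T * A ∈ I)
    (hInz : ∃ T ∈ I, T ≠ 0)
    -- NI is a symmetric norm on I, agreeing with the operator norm on rank-one operators
    (hNI0 : ∀ T ∈ I, 0 ≤ NI T)
    (hNIsym : ∀ A B : H →L[ℂ] H, ∀ X ∈ I, NI (A * X * B) ≤ ‖A‖ * NI X * ‖B‖)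
    (hNIrk1 : ∀ X ∈ I, (∃ u v : H, X = (innerSL ℂ v).smulRight u) → NI X = ‖X‖)
    (S : Set (H →L[ℂ] H)) :
    (∀ k ∈ I, ∃ M : ℝ, ∀ x ∈ S, NI (x * k) ≤ M) ↔ ∃ M : ℝ, ∀ x ∈ S, ‖x‖ ≤ M := by
  have hrankOne := rankOne_mem_of_ideal hIl hIr hInz
  constructor
  · intro hbdd
    obtain ⟨T, -, hT0⟩ := hInz
    obtain ⟨w, hw⟩ := DFunLike.ne_iff.mp hT0
    have : Nontrivial H := nontrivial_of_ne _ _ hw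
    obtain ⟨η, hη⟩ := exists_norm_eq H zero_le_one
    obtain ⟨C, hC⟩ := banach_steinhaus (g := ((↑) : S → H →L[ℂ] H)) fun ξ ↦ by
      obtain ⟨M, hM⟩ := hbdd _ (hrankOne ξ η)
      refine ⟨M, fun x ↦ ?_⟩
      simpa [symmNorm_mul_rankOne hIl hrankOne hNIrk1, hη] using hM x x.2
    exact ⟨C, fun x hx ↦ hC ⟨x, hx⟩⟩
  · rintro ⟨M, hM⟩ k hk
    exact ⟨M * NI k, fun x hx ↦ (symmNorm_mul_le hNI0 hNIsym x hk).trans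
      (mul_le_mul_of_nonneg_right (hM x hx) (hNI0 k hk))⟩

/-- For a nonzero symmetrically-normed ideal `(I, ‖·‖_I)` of `B(H)` (with
`‖AXB‖_I ≤ ‖A‖‖X‖_I‖B‖` and `‖X‖_I = ‖X‖` for rank-one `X`), a subset `S ⊆ B(H)` is
bounded in the multiplier topology `μ_I` — i.e. every seminorm `x ↦ ‖x k‖_I`, `k ∈ I`, is
bounded on `S` — if and only if `S` is bounded in operator norm. -/
theorem stmt18 {H : Type*} [NormedAddCommGroup H] [InnerProductSpace ℂ H]
    [CompleteSpace H] (I : Set (H →L[ℂ] H)) (NI : (H →L[ℂ] H) → ℝ)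
    -- I is a nonzero two-sided ideal
    (hI0 : (0 : H →L[ℂ] H) ∈ I) (hIadd : ∀ S T : H →L[ℂ] H, S ∈ I → T ∈ I → S + T ∈ I)
    (hIneg : ∀ T : H →L[ℂ] H, T ∈ I → -T ∈ I)
    (hIl : ∀ A T : H →L[ℂ] H, T ∈ I → A * T ∈ I)
    (hIr : ∀ A T : H →L[ℂ] H, T ∈ I → T * A ∈ I)
    (hInz : ∃ T ∈ I, T ≠ 0)
    -- NI is a symmetric norm on I, agreeing with the operator norm on rank-one operators
    (hNI0 : ∀ T ∈ I, 0 ≤ NI T) (hNIdef : ∀ T ∈ I, NI T = 0 → T = 0)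
    (hNItri : ∀ S T : H →L[ℂ] H, S ∈ I → T ∈ I → NI (S + T) ≤ NI S + NI T)
    (hNIsmul : ∀ (c : ℂ), ∀ T ∈ I, NI (c • T) = ‖c‖ * NI T)
    (hNIsym : ∀ A B : H →L[ℂ] H, ∀ X ∈ I, NI (A * X * B) ≤ ‖A‖ * NI X * ‖B‖)
    (hNIrk1 : ∀ X ∈ I, (∃ u v : H, X = (innerSL ℂ v).smulRight u) → NI X = ‖X‖)
    (S : Set (H →L[ℂ] H)) :
    (∀ k ∈ I, ∃ M : ℝ, ∀ x ∈ S, NI (x * k) ≤ M) ↔ ∃ M : ℝ, ∀ x ∈ S, ‖x‖ ≤ M :=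
  stmt18_general I NI hIl hIr hInz hNI0 hNIsym hNIrk1 S
end
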